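/- arXiv:1610.02952 — 7 statements merged into one kernel-verified Lean document; each statement's English description precedes it below -/
import Mathlib

section
/- Let m be a closed DBM of dimension 2n, let a,b ∈ {0,…,2n−1}, let d ∈ ℚ, and let m' = IncClose(m,a,b,d). Then m' is consistent if and only if all three of the following hold: m[b,a] + d ≥ 0, m[ā,b̄] + d ≥ 0, and m[ā,a] + d + m[b,b̄] + d ≥ 0. -/
namespace Octagon

/-- A DBM of dimension `2*n` with entries in `ℚ ∪ {+∞}`. -/
abbrev DBM (n : ℕ) : Type := Fin (2 * n) → Fin (2 * n) → WithTop ℚ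

/-- `bar i = i + 1` if `i` is even, `i - 1` if `i` is odd. -/
def bar {n : ℕ} (i : Fin (2 * n)) : Fin (2 * n) :=
  if h : (i : ℕ) % 2 = 0 then ⟨(i : ℕ) + 1, by have := i.isLt; omega⟩
  else ⟨(i : ℕ) - 1, by have := i.isLt; omega⟩

/-- A DBM is closed iff its diagonal is zero and it satisfies the triangle inequality. -/
def Closed {n : ℕ} (m : DBM n) : Prop :=
  (∀ i, m i i = 0) ∧ ∀ i j k, m i j ≤ m i k + m k j

/-- A DBM is consistent iff its diagonal entries are nonnegative. -/
def Consistent {n : ℕ} (m : DBM n) : Prop :=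
  ∀ i, 0 ≤ m i i

/-- A DBM is coherent iff `m[i,j] = m[bar j, bar i]` for all `i, j`. -/
def Coherent {n : ℕ} (m : DBM n) : Prop :=
  ∀ i j, m i j = m (bar j) (bar i)

/-- Incremental closure of `m` with the new constraint `x'_a - x'_b ≤ d`. -/
def IncClose {n : ℕ} (m : DBM n) (a b : Fin (2 * n)) (d : ℚ) : DBM n :=
  fun i j =>
    min (m i j) <|
    min (m i a + (d : WithTop ℚ) + m b j) <|
    min (m i (bar b) + (d : WithTop ℚ) + m (bar a) j) <|
    min (m i (bar b) + (d : WithTop ℚ) + m (bar a) a + (d : WithTop ℚ) + m b j)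
        (m i a + (d : WithTop ℚ) + m b (bar b) + (d : WithTop ℚ) + m (bar a) j)

/-- Halving on `ℚ ∪ {+∞}`, mapping `+∞` to `+∞`. -/
def halve : WithTop ℚ → WithTop ℚ := WithTop.map (fun x => x / 2)

/-- Strengthening of a DBM. -/
def Strengthen {n : ℕ} (m : DBM n) : DBM n :=
  fun i j => min (m i j) (halve (m i (bar i) + m (bar j) j))

/-!
The diagonal entry `IncClose m a b d i i` is the minimum of `m i i` and the weights of four cycles
through `i` that use the new edge `a → b` (or its mirror `bar b → bar a`). Shortcutting `i` by the
triangle inequality makes each cycle at least as heavy as one of the three listed sums, and these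
sums are attained as cycles at `i = b` and `i = bar a`, where `m i i = 0`.
-/

section

variable {n : ℕ} {m : DBM n} {a b : Fin (2 * n)} {d : ℚ}

theorem incClose_le_via_edge (i j : Fin (2 * n)) :
    IncClose m a b d i j ≤ m i a + (d : WithTop ℚ) + m b j :=
  min_le_of_right_le (min_le_left _ _)

theorem incClose_le_via_barEdge (i j : Fin (2 * n)) :
    IncClose m a b d i j ≤ m i (bar b) + (d : WithTop ℚ) + m (bar a) j :=
  min_le_of_right_le (min_le_of_right_le (min_le_left _ _))

theorem incClose_le_via_edge_barEdge (i j : Fin (2 * n)) :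
    IncClose m a b d i j ≤
      m i a + (d : WithTop ℚ) + m b (bar b) + (d : WithTop ℚ) + m (bar a) j :=
  min_le_of_right_le (min_le_of_right_le (min_le_of_right_le (min_le_right _ _)))

theorem nonneg_of_consistent_incClose (hdiag : ∀ i, m i i = 0)
    (h : Consistent (IncClose m a b d)) :
    0 ≤ m b a + (d : WithTop ℚ) ∧
      0 ≤ m (bar a) (bar b) + (d : WithTop ℚ) ∧
      0 ≤ m (bar a) a + (d : WithTop ℚ) + m b (bar b) + (d : WithTop ℚ) := by
  refine ⟨?_, ?_, ?_⟩
  · simpa only [hdiag b, add_zero] using (h b).trans (incClose_le_via_edge b b)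
  · simpa only [hdiag (bar a), add_zero] using (h (bar a)).trans (incClose_le_via_barEdge _ _)
  · simpa only [hdiag (bar a), add_zero] using
      (h (bar a)).trans (incClose_le_via_edge_barEdge _ _)

theorem le_add_add_of_triangle (htri : ∀ i j k, m i j ≤ m i k + m k j) (c : WithTop ℚ)
    (i j k : Fin (2 * n)) : m j k + c ≤ m i k + c + m j i :=
  calc m j k + c ≤ m j i + m i k + c := by gcongr; exact htri j k i
    _ = m i k + c + m j i := by abel

theorem consistent_incClose (hm : Closed m) (h₁ : 0 ≤ m b a + (d : WithTop ℚ))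
    (h₂ : 0 ≤ m (bar a) (bar b) + (d : WithTop ℚ))
    (h₃ : 0 ≤ m (bar a) a + (d : WithTop ℚ) + m b (bar b) + (d : WithTop ℚ)) :
    Consistent (IncClose m a b d) := by
  intro i
  have shortcut := le_add_add_of_triangle hm.2
  simp only [IncClose, le_min_iff]
  refine ⟨(hm.1 i).ge, h₁.trans (shortcut _ i b a), h₂.trans (shortcut _ i (bar a) (bar b)),
    h₃.trans ?_, h₃.trans ?_⟩
  · convert shortcut ((d : WithTop ℚ) + m (bar a) a + d) i b (bar b) using 1 <;> abel
  · convert shortcut ((d : WithTop ℚ) + m b (bar b) + d) i (bar a) a using 1 <;> abel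

end

/-- Lemma 1: `IncClose m a b d` is consistent iff the three listed
inequalities hold. -/
theorem incClose_consistent_iff {n : ℕ} (m : DBM n) (hm : Closed m)
    (a b : Fin (2 * n)) (d : ℚ) (m' : DBM n) (hm' : m' = IncClose m a b d) :
    Consistent m' ↔
      (0 ≤ m b a + (d : WithTop ℚ) ∧
       0 ≤ m (bar a) (bar b) + (d : WithTop ℚ) ∧
       0 ≤ m (bar a) a + (d : WithTop ℚ) + m b (bar b) + (d : WithTop ℚ)) := by
  subst hm'
  exact ⟨nonneg_of_consistent_incClose hm.1, fun ⟨h₁, h₂, h₃⟩ => consistent_incClose hm h₁ h₂ h₃⟩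

end Octagon
end

section
/- Let m be a closed DBM of dimension 2n, let a,b ∈ {0,…,2n−1}, let d ∈ ℚ, and let m' = IncClose(m,a,b,d). If m[b,a] + d < 0, or m[ā,b̄] + d < 0, or m[b,b̄] + d + m[ā,a] + d < 0, then m' is not consistent. -/
namespace Octagon

/-- Corollary 1: fast inconsistency detection for incremental closure. -/
theorem incClose_not_consistent {n : ℕ} (m : DBM n) (hm : Closed m)
    (a b : Fin (2 * n)) (d : ℚ) (m' : DBM n) (hm' : m' = IncClose m a b d)
    (h : m b a + (d : WithTop ℚ) < 0 ∨
         m (bar a) (bar b) + (d : WithTop ℚ) < 0 ∨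
         m b (bar b) + (d : WithTop ℚ) + m (bar a) a + (d : WithTop ℚ) < 0) :
    ¬ Consistent m' := by
  intro hc
  subst hm'
  obtain ⟨hdiag, _⟩ := hm
  rcases h with h | h | h
  · have hle : IncClose m a b d a a ≤ m a a + (d : WithTop ℚ) + m b a :=
      le_trans (min_le_right _ _) (min_le_left _ _)
    rw [hdiag a, zero_add] at hle
    have hlt : (d : WithTop ℚ) + m b a < 0 := by rwa [add_comm] at h
    exact absurd (le_trans (hc a) hle) (not_le.mpr hlt)
  · have hle : IncClose m a b d (bar b) (bar b) ≤
        m (bar b) (bar b) + (d : WithTop ℚ) + m (bar a) (bar b) :=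
      le_trans (min_le_right _ _) (le_trans (min_le_right _ _) (min_le_left _ _))
    rw [hdiag (bar b), zero_add] at hle
    have hlt : (d : WithTop ℚ) + m (bar a) (bar b) < 0 := by rwa [add_comm] at h
    exact absurd (le_trans (hc (bar b)) hle) (not_le.mpr hlt)
  · have hle : IncClose m a b d (bar b) (bar b) ≤
        m (bar b) (bar b) + (d : WithTop ℚ) + m (bar a) a + (d : WithTop ℚ) + m b (bar b) :=
      le_trans (min_le_right _ _) (le_trans (min_le_right _ _)
        (le_trans (min_le_right _ _) (min_le_left _ _)))
    rw [hdiag (bar b), zero_add] at hle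
    have heq : (d : WithTop ℚ) + m (bar a) a + (d : WithTop ℚ) + m b (bar b)
        = m b (bar b) + (d : WithTop ℚ) + m (bar a) a + (d : WithTop ℚ) := by
      abel
    rw [heq] at hle
    exact absurd (le_trans (hc (bar b)) hle) (not_le.mpr h)

end Octagon
end

section
/- Let m be a closed DBM of dimension 2n, let a,b ∈ {0,…,2n−1}, let d ∈ ℚ, and let m' = IncClose(m,a,b,d). Then m' is either closed or it is not consistent. -/
namespace Octagon

/-!
Read `m` as the shortest-path matrix of a weighted graph; `IncClose m a b d` adds the two edges
`a → b` and `bar b → bar a` of weight `d`. Adding a single edge `a → b` to a closed matrix keeps it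
closed as soon as the new cycle `d + m b a` is nonnegative, and when the cycle through both new
edges is nonnegative, `IncClose` is obtained by adding the two edges one after the other. If
`IncClose m a b d` is consistent, its diagonal shows that all these cycles are nonnegative.
-/

def addEdge {n : ℕ} (m : DBM n) (a b : Fin (2 * n)) (d : WithTop ℚ) : DBM n :=
  fun i j => min (m i j) (m i a + d + m b j)

section

variable {n : ℕ} {m : DBM n} {a b : Fin (2 * n)}

theorem Closed.addEdge {d : WithTop ℚ} (hm : Closed m) (hd : 0 ≤ d + m b a) :
    Closed (addEdge m a b d) := by
  obtain ⟨hdiag, htri⟩ := hm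
  refine ⟨fun i => le_antisymm (min_le_of_left_le (hdiag i).le) ?_, fun i j k => ?_⟩
  · refine le_min (hdiag i).ge (hd.trans ?_)
    calc d + m b a ≤ d + (m b i + m i a) := by gcongr; exact htri b a i
      _ = m i a + d + m b i := by abel
  · simp only [Octagon.addEdge]
    rw [← min_add_add_right, ← min_add_add_left, ← min_add_add_left]
    refine le_min (le_min (min_le_of_left_le (htri i j k)) (min_le_of_right_le ?_))
      (le_min (min_le_of_right_le ?_) (min_le_of_right_le ?_))
    · calc m i a + d + m b j ≤ (m i k + m k a) + d + m b j := by gcongr; exact htri i a k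
        _ = _ := by abel
    · calc m i a + d + m b j ≤ m i a + d + (m b k + m k j) := by gcongr; exact htri b j k
        _ = _ := by abel
    · calc m i a + d + m b j ≤ m i a + d + m b j + (d + m b a) := le_add_of_nonneg_right hd
        _ ≤ m i a + d + m b j + (d + (m b k + m k a)) := by gcongr; exact htri b a k
        _ = _ := by abel

theorem incClose_eq_addEdge_addEdge {d : ℚ}
    (hd : 0 ≤ (d : WithTop ℚ) + m (bar a) a + d + m b (bar b)) :
    IncClose m a b d = addEdge (addEdge m a b d) (bar b) (bar a) d := by
  funext i j
  simp only [IncClose, Octagon.addEdge, ← min_add_add_right, ← min_add_add_left, add_assoc]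
  -- the one extra path `a → b → bar b → bar a → a → b` contains the cycle `hd`
  have h_absorb : m i a + (d + m b j) ≤
      m i a + (d + (m b (bar b) + (d + (m (bar a) a + (d + m b j))))) :=
    (le_add_of_nonneg_right hd).trans_eq (by abel)
  apply le_antisymm <;> simp only [le_min_iff, min_le_iff, le_refl, h_absorb, true_or, or_true,
    and_true]

theorem nonneg_cycles_of_consistent_incClose {d : ℚ} (hm : ∀ i, m i i = 0)
    (hc : Consistent (IncClose m a b d)) :
    0 ≤ (d : WithTop ℚ) + m b a ∧ 0 ≤ (d : WithTop ℚ) + m (bar a) (bar b) ∧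
      0 ≤ (d : WithTop ℚ) + m (bar a) a + d + m b (bar b) := by
  have h_a := hc a
  have h_bar_b := hc (bar b)
  simp only [IncClose, le_min_iff, hm, zero_add] at h_a h_bar_b
  exact ⟨h_a.2.1, h_bar_b.2.2.1, h_bar_b.2.2.2.1⟩

end

/-- Theorem 1 (Correctness of IncClose): the result is closed or inconsistent. -/
theorem incClose_closed_or_not_consistent {n : ℕ} (m : DBM n) (hm : Closed m)
    (a b : Fin (2 * n)) (d : ℚ) (m' : DBM n) (hm' : m' = IncClose m a b d) :
    Closed m' ∨ ¬ Consistent m' := by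
  subst hm'
  by_cases hc : Consistent (IncClose m a b d)
  · obtain ⟨h_ab, h_bar, h_both⟩ := nonneg_cycles_of_consistent_incClose hm.1 hc
    have h_bar' : 0 ≤ (d : WithTop ℚ) + addEdge m a b d (bar a) (bar b) := by
      rw [addEdge, ← min_add_add_left]
      exact le_min h_bar (h_both.trans_eq (by abel))
    rw [incClose_eq_addEdge_addEdge h_both]
    exact .inl ((hm.addEdge h_ab).addEdge h_bar')
  · exact .inr hc

end Octagon
end

section
/- Let m be a coherent DBM of dimension 2n, let a,b ∈ {0,…,2n−1}, let d ∈ ℚ, and let m' = IncClose(m,a,b,d). Then m' is coherent. -/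
namespace Octagon

lemma bar_bar {n : ℕ} (i : Fin (2 * n)) : bar (bar i) = i := by
  unfold bar
  rcases i with ⟨v, hv⟩
  by_cases h : v % 2 = 0
  · have h2 : ¬ ((v + 1) % 2 = 0) := by omega
    simp only [h, dif_pos, h2, dif_neg]
    exact Fin.ext (by simp)
  · have h2 : (v - 1) % 2 = 0 := by omega
    simp only [h, dif_neg, h2, dif_pos, not_false_iff]
    exact Fin.ext (by simp; omega)

/-- Proposition (coherence is preserved by incremental closure). -/
theorem incClose_coherent {n : ℕ} (m : DBM n) (hm : Coherent m)
    (a b : Fin (2 * n)) (d : ℚ) (m' : DBM n) (hm' : m' = IncClose m a b d) :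
    Coherent m' := by
  subst hm'
  intro i j
  simp only [IncClose]
  have e1 : m (bar j) (bar i) = m i j := (hm i j).symm
  have e2 : m (bar j) a = m (bar a) j := by
    have := hm (bar a) j; rw [bar_bar] at this; exact this.symm
  have e3 : m b (bar i) = m i (bar b) := by
    have := hm i (bar b); rw [bar_bar] at this; exact this.symm
  have e4 : m (bar j) (bar b) = m b j := by
    exact (hm b j).symm
  have e5 : m (bar a) (bar i) = m i a := by
    exact (hm i a).symm
  rw [e1, e2, e3, e4, e5]
  have A : m (bar a) j + (d : WithTop ℚ) + m i (bar b) =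
      m i (bar b) + (d : WithTop ℚ) + m (bar a) j := by abel
  have B : m b j + (d : WithTop ℚ) + m i a = m i a + (d : WithTop ℚ) + m b j := by abel
  have C : m b j + (d : WithTop ℚ) + m (bar a) a + (d : WithTop ℚ) + m i (bar b) =
      m i (bar b) + (d : WithTop ℚ) + m (bar a) a + (d : WithTop ℚ) + m b j := by abel
  have D : m (bar a) j + (d : WithTop ℚ) + m b (bar b) + (d : WithTop ℚ) + m i a =
      m i a + (d : WithTop ℚ) + m b (bar b) + (d : WithTop ℚ) + m (bar a) j := by abel
  rw [A, B, C, D, min_left_comm (m i (bar b) + (d : WithTop ℚ) + m (bar a) j)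
      (m i a + (d : WithTop ℚ) + m b j)]

end Octagon
end

section
/- Let m be a closed DBM of dimension 2n, let a,b ∈ {0,…,2n−1}, let d ∈ ℚ, and let m' = IncClose(m,a,b,d). If m' is consistent, then for all i,j ∈ {0,…,2n−1}: (1) m'[i,j] ≤ m'[i,a] + d + m'[b,j]; (2) m'[i,j] ≤ m'[i,b̄] + d + m'[ā,j]; (3) m'[i,j] ≤ m'[i,b̄] + d + m'[ā,a] + d + m'[b,j]; and (4) m'[i,j] ≤ m'[i,a] + d + m'[b,b̄] + d + m'[ā,j]. -/
namespace Octagon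

private lemma aux {x t e : WithTop ℚ} (he : 0 ≤ e) (h : t = x + e) : x ≤ t :=
  h ▸ le_add_of_nonneg_right he

set_option linter.unreachableTactic false
set_option linter.unusedTactic false

/-- Corollary: if `m' = IncClose m a b d` is consistent then the four
listed shortening inequalities already hold in `m'`. -/
theorem incClose_self_inequalities {n : ℕ} (m : DBM n) (hm : Closed m)
    (a b : Fin (2 * n)) (d : ℚ) (m' : DBM n) (hm' : m' = IncClose m a b d)
    (hcons : Consistent m') :
    ∀ i j,
      m' i j ≤ m' i a + (d : WithTop ℚ) + m' b j ∧
      m' i j ≤ m' i (bar b) + (d : WithTop ℚ) + m' (bar a) j ∧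
      m' i j ≤ m' i (bar b) + (d : WithTop ℚ) + m' (bar a) a + (d : WithTop ℚ) + m' b j ∧
      m' i j ≤ m' i a + (d : WithTop ℚ) + m' b (bar b) + (d : WithTop ℚ) + m' (bar a) j := by
  subst hm'
  obtain ⟨hdiag, -⟩ := hm
  have F1 : (0 : WithTop ℚ) ≤ (d : WithTop ℚ) + m b a := by
    have h := hcons a
    simp only [IncClose, le_min_iff, hdiag a, zero_add] at h
    exact h.2.1
  have F2 : (0 : WithTop ℚ) ≤ (d : WithTop ℚ) + m (bar a) (bar b) := by
    have h := hcons (bar b)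
    simp only [IncClose, le_min_iff, hdiag (bar b), zero_add] at h
    exact h.2.2.1
  have F3 : (0 : WithTop ℚ) ≤ (d : WithTop ℚ) + m b (bar b) + (d : WithTop ℚ) + m (bar a) a := by
    have h := hcons a
    simp only [IncClose, le_min_iff, hdiag a, zero_add] at h
    exact h.2.2.2.2
  have F12 : (0 : WithTop ℚ) ≤ ((d : WithTop ℚ) + m (bar a) (bar b)) + ((d : WithTop ℚ) + m b a) :=
    add_nonneg F2 F1
  -- branch extractors
  have hB2 : ∀ i j, IncClose m a b d i j ≤ m i a + (d : WithTop ℚ) + m b j := by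
    intro i j; simp only [IncClose]; exact le_trans (min_le_right _ _) (min_le_left _ _)
  have hB3 : ∀ i j, IncClose m a b d i j ≤ m i (bar b) + (d : WithTop ℚ) + m (bar a) j := by
    intro i j; simp only [IncClose]
    exact le_trans (min_le_right _ _) (le_trans (min_le_right _ _) (min_le_left _ _))
  have hB4 : ∀ i j, IncClose m a b d i j ≤
      m i (bar b) + (d : WithTop ℚ) + m (bar a) a + (d : WithTop ℚ) + m b j := by
    intro i j; simp only [IncClose]
    exact le_trans (min_le_right _ _) (le_trans (min_le_right _ _)
      (le_trans (min_le_right _ _) (min_le_left _ _)))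
  have hB5 : ∀ i j, IncClose m a b d i j ≤
      m i a + (d : WithTop ℚ) + m b (bar b) + (d : WithTop ℚ) + m (bar a) j := by
    intro i j; simp only [IncClose]
    exact le_trans (min_le_right _ _) (le_trans (min_le_right _ _)
      (le_trans (min_le_right _ _) (min_le_right _ _)))
  -- lower bounds on the entries appearing on the right-hand sides
  have LA : ∀ i, min (m i a) (m i (bar b) + (d : WithTop ℚ) + m (bar a) a)
      ≤ IncClose m a b d i a := by
    intro i
    simp only [IncClose, le_min_iff]
    refine ⟨min_le_left _ _, ?_, min_le_right _ _, ?_, ?_⟩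
    · exact (min_le_left _ _).trans (aux F1 (by abel1))
    · exact (min_le_right _ _).trans (aux F1 (by abel1))
    · exact (min_le_left _ _).trans (aux F3 (by abel1))
  have LB : ∀ j, min (m b j) (m b (bar b) + (d : WithTop ℚ) + m (bar a) j)
      ≤ IncClose m a b d b j := by
    intro j
    simp only [IncClose, le_min_iff]
    refine ⟨min_le_left _ _, ?_, min_le_right _ _, ?_, ?_⟩
    · exact (min_le_left _ _).trans (aux F1 (by abel1))
    · exact (min_le_left _ _).trans (aux F3 (by abel1))
    · exact (min_le_right _ _).trans (aux F1 (by abel1))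
  have LC : ∀ i, min (m i (bar b)) (m i a + (d : WithTop ℚ) + m b (bar b))
      ≤ IncClose m a b d i (bar b) := by
    intro i
    simp only [IncClose, le_min_iff]
    refine ⟨min_le_left _ _, min_le_right _ _, ?_, ?_, ?_⟩
    · exact (min_le_left _ _).trans (aux F2 (by abel1))
    · exact (min_le_left _ _).trans (aux F3 (by abel1))
    · exact (min_le_right _ _).trans (aux F2 (by abel1))
  have LD : ∀ j, min (m (bar a) j) (m (bar a) a + (d : WithTop ℚ) + m b j)
      ≤ IncClose m a b d (bar a) j := by
    intro j
    simp only [IncClose, le_min_iff]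
    refine ⟨min_le_left _ _, min_le_right _ _, ?_, ?_, ?_⟩
    · exact (min_le_left _ _).trans (aux F2 (by abel1))
    · exact (min_le_right _ _).trans (aux F2 (by abel1))
    · exact (min_le_left _ _).trans (aux F3 (by abel1))
  have LE' : m (bar a) a ≤ IncClose m a b d (bar a) a := by
    simp only [IncClose, le_min_iff]
    refine ⟨le_refl _, aux F1 (by abel1), aux F2 (by abel1), aux F12 (by abel1), aux F3 (by abel1)⟩
  have LF : m b (bar b) ≤ IncClose m a b d b (bar b) := by
    simp only [IncClose, le_min_iff]
    refine ⟨le_refl _, aux F1 (by abel1), aux F2 (by abel1), aux F3 (by abel1), aux F12 (by abel1)⟩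
  intro i j
  refine ⟨?_, ?_, ?_, ?_⟩
  · refine le_trans ?_ (add_le_add (add_le_add (LA i) le_rfl) (LB j))
    rcases min_cases (m i a) (m i (bar b) + (d : WithTop ℚ) + m (bar a) a) with ⟨h1, -⟩ | ⟨h1, -⟩ <;>
      rcases min_cases (m b j) (m b (bar b) + (d : WithTop ℚ) + m (bar a) j) with ⟨h2, -⟩ | ⟨h2, -⟩ <;>
      rw [h1, h2] <;>
      first
        | (refine (hB2 i j).trans (le_of_eq ?_); abel1)
        | (refine (hB3 i j).trans (le_of_eq ?_); abel1)
        | (refine (hB4 i j).trans (le_of_eq ?_); abel1)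
        | (refine (hB5 i j).trans (le_of_eq ?_); abel1)
        | (refine (hB2 i j).trans (aux F3 ?_); abel1)
        | (refine (hB3 i j).trans (aux F3 ?_); abel1)
        | (refine (hB4 i j).trans (aux F3 ?_); abel1)
        | (refine (hB5 i j).trans (aux F3 ?_); abel1)
  · refine le_trans ?_ (add_le_add (add_le_add (LC i) le_rfl) (LD j))
    rcases min_cases (m i (bar b)) (m i a + (d : WithTop ℚ) + m b (bar b)) with ⟨h1, -⟩ | ⟨h1, -⟩ <;>
      rcases min_cases (m (bar a) j) (m (bar a) a + (d : WithTop ℚ) + m b j) with ⟨h2, -⟩ | ⟨h2, -⟩ <;>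
      rw [h1, h2] <;>
      first
        | (refine (hB2 i j).trans (le_of_eq ?_); abel1)
        | (refine (hB3 i j).trans (le_of_eq ?_); abel1)
        | (refine (hB4 i j).trans (le_of_eq ?_); abel1)
        | (refine (hB5 i j).trans (le_of_eq ?_); abel1)
        | (refine (hB2 i j).trans (aux F3 ?_); abel1)
        | (refine (hB3 i j).trans (aux F3 ?_); abel1)
        | (refine (hB4 i j).trans (aux F3 ?_); abel1)
        | (refine (hB5 i j).trans (aux F3 ?_); abel1)
  · refine le_trans ?_
      (add_le_add (add_le_add (add_le_add (add_le_add (LC i) le_rfl) LE') le_rfl) (LB j))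
    rcases min_cases (m i (bar b)) (m i a + (d : WithTop ℚ) + m b (bar b)) with ⟨h1, -⟩ | ⟨h1, -⟩ <;>
      rcases min_cases (m b j) (m b (bar b) + (d : WithTop ℚ) + m (bar a) j) with ⟨h2, -⟩ | ⟨h2, -⟩ <;>
      rw [h1, h2] <;>
      first
        | (refine (hB2 i j).trans (le_of_eq ?_); abel1)
        | (refine (hB3 i j).trans (le_of_eq ?_); abel1)
        | (refine (hB4 i j).trans (le_of_eq ?_); abel1)
        | (refine (hB5 i j).trans (le_of_eq ?_); abel1)
        | (refine (hB2 i j).trans (aux F3 ?_); abel1)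
        | (refine (hB3 i j).trans (aux F3 ?_); abel1)
        | (refine (hB4 i j).trans (aux F3 ?_); abel1)
        | (refine (hB5 i j).trans (aux F3 ?_); abel1)
  · refine le_trans ?_
      (add_le_add (add_le_add (add_le_add (add_le_add (LA i) le_rfl) LF) le_rfl) (LD j))
    rcases min_cases (m i a) (m i (bar b) + (d : WithTop ℚ) + m (bar a) a) with ⟨h1, -⟩ | ⟨h1, -⟩ <;>
      rcases min_cases (m (bar a) j) (m (bar a) a + (d : WithTop ℚ) + m b j) with ⟨h2, -⟩ | ⟨h2, -⟩ <;>
      rw [h1, h2] <;>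
      first
        | (refine (hB2 i j).trans (le_of_eq ?_); abel1)
        | (refine (hB3 i j).trans (le_of_eq ?_); abel1)
        | (refine (hB4 i j).trans (le_of_eq ?_); abel1)
        | (refine (hB5 i j).trans (le_of_eq ?_); abel1)
        | (refine (hB2 i j).trans (aux F3 ?_); abel1)
        | (refine (hB3 i j).trans (aux F3 ?_); abel1)
        | (refine (hB4 i j).trans (aux F3 ?_); abel1)
        | (refine (hB5 i j).trans (aux F3 ?_); abel1)

end Octagon
end

section
/- Let m be a closed and coherent DBM of dimension 2n. Then Strengthen(m) is strongly closed; that is, writing m' = Strengthen(m), one has m'[i,i] = 0 for all i, m'[i,j] ≤ m'[i,k] + m'[k,j] for all i,j,k, and m'[i,j] ≤ m'[i,ī]/2 + m'[j̄,j]/2 for all i,j. -/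
namespace Octagon

lemma halve_add (a b : WithTop ℚ) : halve (a + b) = halve a + halve b := by
  induction a using WithTop.recTopCoe <;> induction b using WithTop.recTopCoe <;>
    simp [halve, ← WithTop.coe_add]
  ring

lemma halve_add_self (a : WithTop ℚ) : halve (a + a) = a := by
  induction a using WithTop.recTopCoe <;> simp [halve, ← WithTop.coe_add]

lemma halve_monotone : Monotone halve := by
  intro a b h
  induction a using WithTop.recTopCoe <;> induction b using WithTop.recTopCoe <;>
    simp_all [halve]
  linarith

lemma halve_nonneg {a : WithTop ℚ} (h : 0 ≤ a) : 0 ≤ halve a := by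
  simpa [halve] using halve_monotone h

lemma val_bar {n : ℕ} (i : Fin (2 * n)) :
    (bar i : ℕ) = if (i : ℕ) % 2 = 0 then (i : ℕ) + 1 else (i : ℕ) - 1 := by
  unfold bar
  split_ifs <;> rfl

section

variable {n : ℕ} {m : DBM n}

lemma strengthen_le_halve_add_halve (i j : Fin (2 * n)) :
    Strengthen m i j ≤ halve (m i (bar i)) + halve (m (bar j) j) :=
  halve_add _ _ ▸ min_le_right _ _

lemma strengthen_self_bar (i : Fin (2 * n)) : Strengthen m i (bar i) = m i (bar i) := by
  simp [Strengthen, bar_bar, halve_add_self]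

lemma strengthen_bar_self (i : Fin (2 * n)) : Strengthen m (bar i) i = m (bar i) i := by
  simpa only [bar_bar] using strengthen_self_bar (m := m) (bar i)

namespace Closed

lemma zero_le_add (hcl : Closed m) (i j : Fin (2 * n)) : 0 ≤ m i j + m j i := by
  simpa only [hcl.1 i] using hcl.2 i i j

lemma strengthen_self (hcl : Closed m) (i : Fin (2 * n)) : Strengthen m i i = 0 := by
  simp only [Strengthen, hcl.1 i]
  exact min_eq_left (halve_nonneg (hcl.zero_le_add i (bar i)))

lemma halve_le_add_halve (hcl : Closed m) (hcoh : Coherent m) (i k : Fin (2 * n)) :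
    halve (m i (bar i)) ≤ m i k + halve (m k (bar k)) := by
  have h : m i (bar i) ≤ (m i k + m i k) + m k (bar k) :=
    calc m i (bar i) ≤ m i k + m k (bar i) := hcl.2 _ _ _
      _ ≤ m i k + (m k (bar k) + m (bar k) (bar i)) := by gcongr; exact hcl.2 _ _ _
      _ = (m i k + m i k) + m k (bar k) := by rw [← hcoh i k]; abel
  have h' := halve_monotone h
  rwa [halve_add, halve_add_self] at h'

lemma halve_le_halve_add (hcl : Closed m) (hcoh : Coherent m) (k j : Fin (2 * n)) :
    halve (m (bar j) j) ≤ halve (m (bar k) k) + m k j := by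
  simpa only [bar_bar, ← hcoh k j, add_comm (m k j)] using
    hcl.halve_le_add_halve hcoh (bar j) (bar k)

/- The right side is the minimum of four sums: the mixed ones dominate the halved candidate by
`halve_le_add_halve` and `halve_le_halve_add`, the doubly halved one since `m k̄ k + m k k̄ ≥ 0`. -/
lemma strengthen_triangle (hcl : Closed m) (hcoh : Coherent m) (i j k : Fin (2 * n)) :
    Strengthen m i j ≤ Strengthen m i k + Strengthen m k j := by
  have hik := hcl.halve_le_add_halve hcoh i k
  have hkj := hcl.halve_le_halve_add hcoh k j
  have hk : 0 ≤ halve (m (bar k) k) + halve (m k (bar k)) := by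
    rw [← halve_add]; exact halve_nonneg (hcl.zero_le_add _ _)
  simp only [Strengthen, ← min_add_add_left, ← min_add_add_right, le_min_iff, halve_add]
  refine ⟨⟨(min_le_left _ _).trans (hcl.2 i j k), ?_⟩, ?_, ?_⟩ <;>
    refine (min_le_right _ _).trans ?_
  · rw [add_assoc]; gcongr
  · rw [← add_assoc]; gcongr
  · calc _ ≤ halve (m i (bar i)) + halve (m (bar j) j) +
            (halve (m (bar k) k) + halve (m k (bar k))) := le_add_of_nonneg_right hk
      _ = _ := by abel

end Closed

end

/-- Theorem: strengthening a closed coherent DBM yields a strongly closed DBM. -/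
theorem strengthen_stronglyClosed {n : ℕ} (m : DBM n) (hcl : Closed m)
    (hcoh : Coherent m) (m' : DBM n) (hm' : m' = Strengthen m) :
    (∀ i, m' i i = 0) ∧
    (∀ i j k, m' i j ≤ m' i k + m' k j) ∧
    (∀ i j, m' i j ≤ halve (m' i (bar i)) + halve (m' (bar j) j)) := by
  subst hm'
  refine ⟨hcl.strengthen_self, hcl.strengthen_triangle hcoh, fun i j => ?_⟩
  rw [strengthen_self_bar, strengthen_bar_self]
  exact strengthen_le_halve_add_halve i j

end Octagon
end

section
/- Let m be a DBM of dimension 2n, let a,b ∈ {0,…,2n−1}, let d ∈ ℚ, and write Q(i,j) = min( m[i,j], m[i,a]+d+m[b,j], m[i,b̄]+d+m[ā,j], m[i,b̄]+d+m[ā,a]+d+m[b,j], m[i,a]+d+m[b,b̄]+d+m[ā,j] ). Define the DBM m' by m'[i,ī] = Q(i,ī) for all i, and m'[i,j] = min( Q(i,j), (m'[i,ī] + m'[j̄,j])/2 ) for all i,j with j ≠ ī. Let m† = IncClose(m,a,b,d) and m* = Strengthen(m†). Then m' = m*; that is, the one-pass incremental strong closure equals strengthening applied after incremental closure. -/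
namespace Octagon

/-- Theorem: one-pass incremental strong closure (key entries first, then
strengthening the remaining entries on-the-fly) equals strengthening applied
after incremental closure. -/
theorem incStrongClose_eq_strengthen_incClose {n : ℕ} (m : DBM n)
    (a b : Fin (2 * n)) (d : ℚ) (m' : DBM n)
    (hkey : ∀ i, m' i (bar i) = IncClose m a b d i (bar i))
    (hrest : ∀ i j, j ≠ bar i →
      m' i j = min (IncClose m a b d i j) (halve (m' i (bar i) + m' (bar j) j))) :
    m' = Strengthen (IncClose m a b d) := by
  have barbar : ∀ i : Fin (2 * n), bar (bar i) = i := by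
    intro i
    have hlt := i.isLt
    unfold bar
    by_cases h : (i : ℕ) % 2 = 0
    · rw [dif_pos h]
      rw [dif_neg (by simp; omega :
        ¬ ((⟨(i : ℕ) + 1, by omega⟩ : Fin (2 * n)) : ℕ) % 2 = 0)]
      exact Fin.ext (by simp)
    · rw [dif_neg h]
      rw [dif_pos (by simp; omega :
        ((⟨(i : ℕ) - 1, by omega⟩ : Fin (2 * n)) : ℕ) % 2 = 0)]
      exact Fin.ext (by simp; omega)
  have halve_add_self : ∀ x : WithTop ℚ, halve (x + x) = x := by
    intro x
    cases x with
    | top => rfl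
    | coe q =>
        show halve ((q + q : ℚ) : WithTop ℚ) = q
        unfold halve
        rw [WithTop.map_coe]
        norm_num
  funext i j
  by_cases hj : j = bar i
  · subst hj
    rw [hkey]
    unfold Strengthen
    rw [barbar, ← hkey i, hkey, halve_add_self, min_self]
  · rw [hrest i j hj]
    unfold Strengthen
    have h2 := hkey (bar j)
    rw [barbar] at h2
    rw [hkey i, h2]

end Octagon
end
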